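/- First-order consistency of the completely positive splitting scheme in finite dimension: there exists a constant C > 0 (depending on H and L_1,…,L_m) such that for every Δt ∈ [0,1] and every d×d complex matrix ρ, ‖exp(Δt·𝓛)(ρ) − ((I + Δt·G) ρ (I + Δt·G)ᴴ + Δt · Σⱼ Lⱼ ρ Lⱼᴴ)‖₁ ≤ C · Δt² · ‖ρ‖₁. -/

import Mathlib

open Matrix
open scoped ComplexOrder

attribute [local instance] Matrix.normedAddCommGroup Matrix.normedSpace

/-- The positive semidefinite square root of a matrix (defined to be `0` if the matrix is not
positive semidefinite). -/
noncomputable def matSqrt {d : ℕ} (A : Matrix (Fin d) (Fin d) ℂ) : Matrix (Fin d) (Fin d) ℂ :=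
  open scoped Classical in
  if h : A.PosSemidef then
    (h.1.eigenvectorUnitary : Matrix (Fin d) (Fin d) ℂ) *
      diagonal ((↑) ∘ (√·) ∘ h.1.eigenvalues) *
      (star h.1.eigenvectorUnitary : Matrix (Fin d) (Fin d) ℂ)
  else 0

/-- The trace norm `‖A‖₁ = Re (Tr √(AᴴA))` of a complex matrix. -/
noncomputable def traceNorm {d : ℕ} (A : Matrix (Fin d) (Fin d) ℂ) : ℝ :=
  (Matrix.trace (matSqrt (Aᴴ * A))).re

/-- The Lindbladian `𝓛(ρ) = −i(Hρ − ρH) + Σⱼ (Lⱼ ρ Lⱼᴴ − ½(LⱼᴴLⱼ ρ + ρ LⱼᴴLⱼ))` as a linear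
endomorphism of the space of `d×d` complex matrices. -/
noncomputable def lindbladEnd {d m : ℕ} (H : Matrix (Fin d) (Fin d) ℂ)
    (L : Fin m → Matrix (Fin d) (Fin d) ℂ) :
    Matrix (Fin d) (Fin d) ℂ →ₗ[ℂ] Matrix (Fin d) (Fin d) ℂ :=
  Complex.I • (LinearMap.mulRight ℂ H - LinearMap.mulLeft ℂ H)
    + ∑ j, ((LinearMap.mulRight ℂ ((L j)ᴴ)).comp (LinearMap.mulLeft ℂ (L j))
        - (2⁻¹ : ℂ) • (LinearMap.mulLeft ℂ ((L j)ᴴ * L j)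
            + LinearMap.mulRight ℂ ((L j)ᴴ * L j)))

instance instIsTopologicalRingMatrixCLM {d : ℕ} :
    IsTopologicalRing (Matrix (Fin d) (Fin d) ℂ →L[ℂ] Matrix (Fin d) (Fin d) ℂ) :=
  @NonUnitalSeminormedRing.toIsTopologicalRing _
    (ContinuousLinearMap.toSeminormedRing (𝕜 := ℂ)
      (E := Matrix (Fin d) (Fin d) ℂ)).toNonUnitalSeminormedRing

/- For real `t` and Hermitian `H` the scheme expands to `ρ + t 𝓛(ρ) + t² GρGᴴ`, so
its distance to `exp(t𝓛)(ρ)` is the second-order remainder of the exponential plus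
`t² GρGᴴ`, both `O(t²)` in operator norm for `t ∈ [0,1]`. In finite dimension the trace norm is
equivalent to the entrywise sup norm: with `μᵢ` the eigenvalues of `AᴴA`, `‖A‖₁ = Σ √μᵢ` and
`Σ μᵢ = Σ |Aᵢⱼ|²`. -/

-- The norm on matrices is a local instance whose topology is the product topology only up to
-- unfolding, so instance search does not find the normed algebra structure on operators.
noncomputable instance instNormedRingMatrixCLM {d : ℕ} :
    NormedRing (Matrix (Fin d) (Fin d) ℂ →L[ℂ] Matrix (Fin d) (Fin d) ℂ) :=
  ContinuousLinearMap.toNormedRing (𝕜 := ℂ) (E := Matrix (Fin d) (Fin d) ℂ)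

noncomputable instance instNormedAlgebraMatrixCLM {d : ℕ} :
    NormedAlgebra ℂ (Matrix (Fin d) (Fin d) ℂ →L[ℂ] Matrix (Fin d) (Fin d) ℂ) :=
  ContinuousLinearMap.toNormedAlgebra (𝕜 := ℂ) (E := Matrix (Fin d) (Fin d) ℂ)

instance instCompleteSpaceMatrixCLM {d : ℕ} :
    @CompleteSpace (Matrix (Fin d) (Fin d) ℂ →L[ℂ] Matrix (Fin d) (Fin d) ℂ)
      (instNormedRingMatrixCLM (d := d)).toUniformSpace :=
  haveI : SequentialSpace (Matrix (Fin d) (Fin d) ℂ) :=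
    inferInstanceAs (SequentialSpace (Fin d → Fin d → ℂ))
  ContinuousLinearMap.instCompleteSpace

namespace NormedSpace

variable {𝔸 : Type*} [NormedRing 𝔸] [CompleteSpace 𝔸]

open scoped Nat in
theorem norm_exp_sub_one_sub_le (𝕂 : Type*) [RCLike 𝕂] [NormedAlgebra 𝕂 𝔸] (x : 𝔸) :
    ‖exp x - 1 - x‖ ≤ ‖x‖ ^ 2 * Real.exp ‖x‖ := by
  have htail : HasSum (fun n => ((n + 2)!⁻¹ : 𝕂) • x ^ (n + 2)) (exp x - 1 - x) := by
    have := (hasSum_nat_add_iff' 2).2 (exp_series_hasSum_exp' (𝕂 := 𝕂) x)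
    simpa [Finset.sum_range_succ, sub_sub] using this
  have hbound : HasSum (fun n => ‖x‖ ^ 2 * (‖x‖ ^ n / n !)) (‖x‖ ^ 2 * Real.exp ‖x‖) := by
    rw [Real.exp_eq_exp_ℝ]
    exact (expSeries_div_hasSum_exp ‖x‖).mul_left _
  refine htail.norm_le_of_bounded hbound fun n => ?_
  rw [norm_smul, norm_inv, RCLike.norm_natCast]
  calc ((n + 2)! : ℝ)⁻¹ * ‖x ^ (n + 2)‖ ≤ (n ! : ℝ)⁻¹ * ‖x‖ ^ (n + 2) := by
        gcongr ?_ * ?_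
        · gcongr; omega
        · exact norm_pow_le' x (by omega)
    _ = _ := by ring

theorem norm_exp_smul_sub_le (𝕂 : Type*) [RCLike 𝕂] [NormedAlgebra 𝕂 𝔸] (x m : 𝔸) {t : ℝ}
    (ht₀ : 0 ≤ t) (ht₁ : t ≤ 1) :
    ‖exp ((t : 𝕂) • x) - (1 + (t : 𝕂) • x + (t : 𝕂) ^ 2 • m)‖
      ≤ t ^ 2 * (‖x‖ ^ 2 * Real.exp ‖x‖ + ‖m‖) := by
  have htx : ‖(t : 𝕂) • x‖ = t * ‖x‖ := by
    rw [norm_smul, RCLike.norm_ofReal, abs_of_nonneg ht₀]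
  have htm : ‖(t : 𝕂) ^ 2 • m‖ = t ^ 2 * ‖m‖ := by
    rw [norm_smul, norm_pow, RCLike.norm_ofReal, sq_abs]
  calc _ = ‖(exp ((t : 𝕂) • x) - 1 - (t : 𝕂) • x) - (t : 𝕂) ^ 2 • m‖ := by
        congr 1; abel
    _ ≤ (t * ‖x‖) ^ 2 * Real.exp (t * ‖x‖) + t ^ 2 * ‖m‖ := by
        rw [← htx, ← htm]
        exact (norm_sub_le _ _).trans (by gcongr; exact norm_exp_sub_one_sub_le 𝕂 _)
    _ ≤ t ^ 2 * (‖x‖ ^ 2 * Real.exp ‖x‖) + t ^ 2 * ‖m‖ := by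
        rw [mul_pow, mul_assoc]
        gcongr
        exact mul_le_of_le_one_left (norm_nonneg x) ht₁
    _ = _ := by ring

end NormedSpace

theorem Matrix.trace_conjTranspose_mul_self_eq_sum_norm_sq {m n : Type*} [Fintype m] [Fintype n]
    (A : Matrix m n ℂ) : (Aᴴ * A).trace = ((∑ i, ∑ j, ‖A i j‖ ^ 2 : ℝ) : ℂ) := by
  rw [Finset.sum_comm]
  simp [Matrix.trace, Matrix.mul_apply, Complex.conj_mul']

section traceNorm

variable {d : ℕ} (A : Matrix (Fin d) (Fin d) ℂ)

theorem traceNorm_eq_sum_sqrt_eigenvalues :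
    traceNorm A = ∑ i, √((posSemidef_conjTranspose_mul_self A).1.eigenvalues i) := by
  have hU := Unitary.coe_star_mul_self (posSemidef_conjTranspose_mul_self A).1.eigenvectorUnitary
  rw [traceNorm, matSqrt, dif_pos (posSemidef_conjTranspose_mul_self A), Matrix.trace_mul_cycle,
    hU, Matrix.one_mul, Matrix.trace_diagonal, Complex.re_sum]
  rfl

theorem sum_eigenvalues_conjTranspose_mul_self :
    ∑ i, (posSemidef_conjTranspose_mul_self A).1.eigenvalues i = ∑ i, ∑ j, ‖A i j‖ ^ 2 := by
  have h := (posSemidef_conjTranspose_mul_self A).1.trace_eq_sum_eigenvalues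
  rw [trace_conjTranspose_mul_self_eq_sum_norm_sq] at h
  simpa [← Complex.ofReal_pow] using (congrArg Complex.re h).symm

theorem norm_le_traceNorm : ‖A‖ ≤ traceNorm A := by
  have hev := (posSemidef_conjTranspose_mul_self A).eigenvalues_nonneg
  have hsum : √(∑ i, ∑ j, ‖A i j‖ ^ 2) ≤ traceNorm A := by
    rw [← sum_eigenvalues_conjTranspose_mul_self, traceNorm_eq_sum_sqrt_eigenvalues,
      Real.sqrt_le_left (Finset.sum_nonneg fun i _ => Real.sqrt_nonneg _)]
    calc ∑ i, _ = ∑ i, √((posSemidef_conjTranspose_mul_self A).1.eigenvalues i) ^ 2 := by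
          simp only [Real.sq_sqrt (hev _)]
      _ ≤ _ := Finset.sum_sq_le_sq_sum_of_nonneg fun i _ => Real.sqrt_nonneg _
  refine (Matrix.norm_le_iff ((Real.sqrt_nonneg _).trans hsum)).2 fun i j => le_trans ?_ hsum
  rw [Real.le_sqrt (norm_nonneg _) (by positivity)]
  exact (Finset.single_le_sum (fun j _ => by positivity) (Finset.mem_univ j)).trans
    (Finset.single_le_sum (f := fun i => ∑ j, ‖A i j‖ ^ 2) (fun i _ => by positivity)
      (Finset.mem_univ i))

theorem traceNorm_le_mul_norm : traceNorm A ≤ d * √d * ‖A‖ := by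
  have hev := (posSemidef_conjTranspose_mul_self A).eigenvalues_nonneg
  have hCS := Real.sum_sqrt_mul_sqrt_le Finset.univ (fun _ => zero_le_one) hev
  simp only [Real.sqrt_one, one_mul, Finset.sum_const, Finset.card_univ, Fintype.card_fin,
    nsmul_eq_mul, mul_one] at hCS
  rw [traceNorm_eq_sum_sqrt_eigenvalues]
  refine hCS.trans ?_
  have hentries : ∑ i, ∑ j, ‖A i j‖ ^ 2 ≤ (d * ‖A‖) ^ 2 := by
    calc _ ≤ ∑ _i : Fin d, ∑ _j : Fin d, ‖A‖ ^ 2 := by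
          gcongr; exact norm_entry_le_entrywise_sup_norm A
      _ = _ := by simp; ring
  calc √d * √(∑ i, _) ≤ √d * (d * ‖A‖) := by
        rw [sum_eigenvalues_conjTranspose_mul_self]
        gcongr
        exact Real.sqrt_le_iff.2 ⟨by positivity, hentries⟩
    _ = d * √d * ‖A‖ := by ring

end traceNorm

section Lindblad

variable {d m : ℕ} (H : Matrix (Fin d) (Fin d) ℂ) (L : Fin m → Matrix (Fin d) (Fin d) ℂ)

/-- The matrix `G = −iH − ½ Σⱼ LⱼᴴLⱼ` of the splitting scheme. -/
noncomputable def lindbladDrift : Matrix (Fin d) (Fin d) ℂ :=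
  -Complex.I • H - (2⁻¹ : ℂ) • ∑ j, (L j)ᴴ * L j

variable {H}

theorem conjTranspose_lindbladDrift (hH : H.IsHermitian) :
    (lindbladDrift H L)ᴴ = Complex.I • H - (2⁻¹ : ℂ) • ∑ j, (L j)ᴴ * L j := by
  simp [lindbladDrift, Matrix.conjTranspose_sum, hH.eq]

theorem lindbladEnd_apply (hH : H.IsHermitian) (ρ : Matrix (Fin d) (Fin d) ℂ) :
    lindbladEnd H L ρ = lindbladDrift H L * ρ + ρ * (lindbladDrift H L)ᴴ
      + ∑ j, L j * ρ * (L j)ᴴ := by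
  rw [conjTranspose_lindbladDrift L hH, lindbladDrift]
  simp only [lindbladEnd, LinearMap.add_apply, LinearMap.smul_apply, LinearMap.sub_apply,
    LinearMap.mulRight_apply, LinearMap.mulLeft_apply, LinearMap.coe_sum, Finset.sum_apply,
    LinearMap.comp_apply]
  simp only [sub_mul, Matrix.mul_sub, Matrix.smul_mul, Matrix.mul_smul, Finset.sum_mul,
    Finset.mul_sum, smul_sub, smul_add, Finset.sum_sub_distrib, Finset.sum_add_distrib,
    Finset.smul_sum, Matrix.mul_assoc]
  module

theorem splitting_step_eq (hH : H.IsHermitian) (t : ℝ) (ρ : Matrix (Fin d) (Fin d) ℂ) :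
    (1 + (t : ℂ) • lindbladDrift H L) * ρ * (1 + (t : ℂ) • lindbladDrift H L)ᴴ
        + (t : ℂ) • ∑ j, L j * ρ * (L j)ᴴ
      = ρ + (t : ℂ) • lindbladEnd H L ρ
        + (t : ℂ) ^ 2 • (lindbladDrift H L * ρ * (lindbladDrift H L)ᴴ) := by
  rw [lindbladEnd_apply L hH]
  simp only [Matrix.conjTranspose_add, Matrix.conjTranspose_one, Matrix.conjTranspose_smul,
    Complex.star_def, Complex.conj_ofReal, Matrix.add_mul, Matrix.mul_add, Matrix.one_mul,
    Matrix.mul_one, Matrix.smul_mul, Matrix.mul_smul, smul_add, smul_smul]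
  module

end Lindblad

/-- First-order consistency of the completely positive splitting scheme in finite dimension:
with `G = −iH − ½ Σⱼ LⱼᴴLⱼ`, there is a constant `C > 0` (depending on `H` and the `Lⱼ`) such
that for all `Δt ∈ [0,1]` and all `ρ`,
`‖exp(Δt 𝓛)(ρ) − ((I + Δt G) ρ (I + Δt G)ᴴ + Δt Σⱼ Lⱼ ρ Lⱼᴴ)‖₁ ≤ C Δt² ‖ρ‖₁`. -/
theorem stmt7 {d m : ℕ} (H : Matrix (Fin d) (Fin d) ℂ) (hH : H.IsHermitian)
    (L : Fin m → Matrix (Fin d) (Fin d) ℂ) :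
    ∃ C : ℝ, 0 < C ∧
      ∀ Δt : ℝ, 0 ≤ Δt → Δt ≤ 1 →
        ∀ ρ : Matrix (Fin d) (Fin d) ℂ,
          traceNorm
            ((NormedSpace.exp ((Δt : ℂ) •
                (LinearMap.toContinuousLinearMap (lindbladEnd H L)))) ρ
              - ((1 + (Δt : ℂ) • (-Complex.I • H - (2⁻¹ : ℂ) • ∑ j, (L j)ᴴ * L j)) * ρ *
                    (1 + (Δt : ℂ) • (-Complex.I • H - (2⁻¹ : ℂ) • ∑ j, (L j)ᴴ * L j))ᴴ
                  + (Δt : ℂ) • ∑ j, L j * ρ * (L j)ᴴ))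
          ≤ C * Δt ^ 2 * traceNorm ρ := by
  rw [← lindbladDrift.eq_1 H L]
  set G := lindbladDrift H L
  set T := LinearMap.toContinuousLinearMap (lindbladEnd H L)
  set M := LinearMap.toContinuousLinearMap
    ((LinearMap.mulLeft ℂ G).comp (LinearMap.mulRight ℂ Gᴴ))
  set c := ‖T‖ ^ 2 * Real.exp ‖T‖ + ‖M‖
  refine ⟨d * √d * c + 1, by positivity, fun Δt h₀ h₁ ρ => ?_⟩
  have hpoly : (1 + (Δt : ℂ) • T + (Δt : ℂ) ^ 2 • M) ρ
      = ρ + (Δt : ℂ) • T ρ + (Δt : ℂ) ^ 2 • M ρ := rfl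
  have hM : M ρ = G * ρ * Gᴴ := by simp [M, Matrix.mul_assoc]
  rw [splitting_step_eq L hH, ← hM, ← show T ρ = lindbladEnd H L ρ from rfl, ← hpoly,
    ← _root_.sub_apply]
  calc _ ≤ d * √d
          * ‖(NormedSpace.exp ((Δt : ℂ) • T) - (1 + (Δt : ℂ) • T + (Δt : ℂ) ^ 2 • M)) ρ‖ :=
        traceNorm_le_mul_norm _
    _ ≤ d * √d * (Δt ^ 2 * c * ‖ρ‖) := by
        gcongr
        exact (ContinuousLinearMap.le_opNorm _ _).trans
          (by gcongr; exact NormedSpace.norm_exp_smul_sub_le ℂ T M h₀ h₁)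
    _ = d * √d * c * Δt ^ 2 * ‖ρ‖ := by ring
    _ ≤ (d * √d * c + 1) * Δt ^ 2 * traceNorm ρ := by
        gcongr
        · linarith
        · exact norm_le_traceNorm ρ
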